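/- Let A ∈ ℝ^{m×n}, b ∈ ℝ^m, λ > 0, and let x ∈ ℝ^n be a point where the slack s(x) := Ax − b has all entries strictly positive. Write S_x := diag(s(x)), A_x := S_x⁻¹A, ψ_i(x) := [A_x(A_xᵀA_x + λI)⁻¹A_xᵀ]_{ii}, and Ψ(x) := diag(ψ(x)). Then the second derivative of f(x) := ½·log det(AᵀS_x⁻²A + λI) at x, viewed as a quadratic form, satisfies hᵀ(A_xᵀΨ(x)A_x)h ≤ D²f(x)[h,h] ≤ 3·hᵀ(A_xᵀΨ(x)A_x)h for every direction h ∈ ℝ^n; equivalently A_xᵀΨ(x)A_x ⪯ ∇²f(x) ⪯ 3·A_xᵀΨ(x)A_x in the Loewner order. -/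

import Mathlib

open Matrix

/-- The slack-rescaled constraint matrix `A_x = S_x⁻¹ A` where `S_x = diag(Ax − b)`. -/
noncomputable def Amat {m n : ℕ} (A : Matrix (Fin m) (Fin n) ℝ) (b : Fin m → ℝ)
    (y : Fin n → ℝ) : Matrix (Fin m) (Fin n) ℝ :=
  (Matrix.diagonal (A.mulVec y - b))⁻¹ * A

/-- The regularized leverage scores `ψᵢ(x) = [A_x(A_xᵀA_x + λI)⁻¹A_xᵀ]_{ii}`. -/
noncomputable def psiReg {m n : ℕ} (A : Matrix (Fin m) (Fin n) ℝ) (b : Fin m → ℝ)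
    (lam : ℝ) (y : Fin n → ℝ) : Fin m → ℝ :=
  fun i =>
    (Amat A b y *
      ((Amat A b y)ᵀ * Amat A b y + lam • (1 : Matrix (Fin n) (Fin n) ℝ))⁻¹ *
      (Amat A b y)ᵀ) i i

/-- The regularized volumetric barrier `f(x) = ½ log det(AᵀS_x⁻²A + λI)`. -/
noncomputable def volBarrier {m n : ℕ} (A : Matrix (Fin m) (Fin n) ℝ) (b : Fin m → ℝ)
    (lam : ℝ) (y : Fin n → ℝ) : ℝ :=
  (1 / 2) *
    Real.log (((Amat A b y)ᵀ * Amat A b y + lam • (1 : Matrix (Fin n) (Fin n) ℝ)).det)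

/-!
Write `d = s(x)⁻¹` for the reciprocal slacks, `M = AᵀD²A + λI`, `G = A M⁻¹ Aᵀ` and
`P = D G D = A_x (A_xᵀA_x + λI)⁻¹ A_xᵀ`, so that `ψ = diag P`. Jacobi's formula gives
`Df(y)h = -∑ᵢ dᵢ³ Gᵢᵢ (Ah)ᵢ`; differentiating once more, with `D(M⁻¹) = -M⁻¹ (DM) M⁻¹`, gives for
`v = A_x h`
  `D²f(x)[h,h] = 3 vᵀΨv - 2 vᵀ(P ⊙ P)v`.
The push-through identity `I - P = λ (A_xA_xᵀ + λI)⁻¹` shows `0 ⪯ P ⪯ I`, and the Schur product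
theorem then gives `0 ⪯ P ⊙ P` and `0 ⪯ (I - P) ⊙ P = Ψ - P ⊙ P`, i.e.
`0 ≤ vᵀ(P ⊙ P)v ≤ vᵀΨv`.
-/

open scoped Matrix.Norms.Operator

namespace Matrix

section Calculus

variable {ι : Type*} [Fintype ι] [DecidableEq ι]

theorem sum_det_updateRow_eq_trace_adjugate_mul {R : Type*} [CommRing R] (X H : Matrix ι ι R) :
    ∑ k, (X.updateRow k (H k)).det = trace (X.adjugate * H) := by
  have hrow (k : ι) : (X.updateRow k (H k)).det = ∑ j, X.adjugate j k * H k j := by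
    rw [← det_transpose, ← updateCol_transpose, ← cramer_apply, cramer_eq_adjugate_mulVec,
      ← adjugate_transpose]
    simp [mulVec, dotProduct, mul_comm]
  simp only [hrow, trace, diag, mul_apply]
  exact Finset.sum_comm

variable {𝕜 : Type*} [RCLike 𝕜]

noncomputable def detRowContinuous : ContinuousMultilinearMap 𝕜 (fun _ : ι => ι → 𝕜) 𝕜 :=
  { (detRowAlternating : (ι → 𝕜) [⋀^ι]→ₗ[𝕜] 𝕜).toMultilinearMap with
    cont := (continuous_id (X := Matrix ι ι 𝕜)).matrix_det }

theorem hasFDerivAt_det (X : Matrix ι ι 𝕜) :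
    HasFDerivAt det ((traceLinearMap ι 𝕜 𝕜).toContinuousLinearMap ∘L
      ContinuousLinearMap.mul 𝕜 _ X.adjugate) X := by
  let rows : Matrix ι ι 𝕜 →L[𝕜] (ι → ι → 𝕜) :=
    (ofLinearEquiv 𝕜).symm.toLinearMap.toContinuousLinearMap
  refine ((detRowContinuous.hasFDerivAt (rows X)).comp X rows.hasFDerivAt).congr_fderiv ?_
  refine ContinuousLinearMap.ext fun H => ?_
  change detRowContinuous.linearDeriv (rows X) (rows H) = trace (X.adjugate * H)
  rw [ContinuousMultilinearMap.linearDeriv_apply, ← sum_det_updateRow_eq_trace_adjugate_mul]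
  rfl

variable {E : Type*} [NormedAddCommGroup E] [NormedSpace 𝕜 E]

theorem _root_.HasFDerivAt.matrix_inv {M : E → Matrix ι ι 𝕜} {M' : E →L[𝕜] Matrix ι ι 𝕜} {x : E}
    (hM : HasFDerivAt M M' x) (hx : IsUnit (M x).det) :
    HasFDerivAt (fun y => (M y)⁻¹)
      (-(ContinuousLinearMap.mulLeftRight 𝕜 _ (M x)⁻¹ (M x)⁻¹) ∘L M') x := by
  obtain ⟨u, hu⟩ := (isUnit_iff_isUnit_det (M x)).mpr hx
  have h := (hu ▸ hasFDerivAt_ringInverse (𝕜 := 𝕜) u).comp x hM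
  have hinv : (M x)⁻¹ = ↑u⁻¹ := by rw [← hu, coe_units_inv]
  rw [hinv, show (fun y => (M y)⁻¹) = Ring.inverse ∘ M from
    funext fun y => nonsing_inv_eq_ringInverse (M y)]
  exact h

theorem _root_.HasFDerivAt.log_det [NormedSpace ℝ E] {M : E → Matrix ι ι ℝ}
    {M' : E →L[ℝ] Matrix ι ι ℝ} {x : E} (hM : HasFDerivAt M M' x) (hx : (M x).det ≠ 0) :
    HasFDerivAt (fun y => Real.log (M y).det)
      ((traceLinearMap ι ℝ ℝ).toContinuousLinearMap ∘L
        ContinuousLinearMap.mul ℝ _ (M x)⁻¹ ∘L M') x := by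
  refine (((hasFDerivAt_det (M x)).comp x hM).log hx).congr_fderiv ?_
  refine ContinuousLinearMap.ext fun h => ?_
  change ((M x).det)⁻¹ * trace ((M x).adjugate * M' h) = trace ((M x)⁻¹ * M' h)
  rw [inv_def, Ring.inverse_eq_inv', smul_mul_assoc, trace_smul, smul_eq_mul]

end Calculus

section Leverage

variable {m n : Type*} [Fintype m] [Fintype n]

theorem trace_mul_transpose_mul_diagonal_mul [DecidableEq m] {R : Type*} [CommSemiring R]
    (X : Matrix n n R) (A : Matrix m n R) (u : m → R) :
    trace (X * (Aᵀ * diagonal u * A)) = ∑ i, u i * (A * X * Aᵀ) i i := by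
  rw [← Matrix.mul_assoc, ← Matrix.mul_assoc, trace_mul_comm, ← Matrix.mul_assoc, trace_mul_comm]
  simp only [trace, diag, diagonal_mul, Matrix.mul_assoc]

theorem dotProduct_mulVec_transpose_mul_mul {R : Type*} [CommSemiring R] (B : Matrix m n R)
    (X : Matrix m m R) (h : n → R) :
    h ⬝ᵥ ((Bᵀ * X * B) *ᵥ h) = (B *ᵥ h) ⬝ᵥ (X *ᵥ (B *ᵥ h)) := by
  rw [← mulVec_mulVec, ← mulVec_mulVec, dotProduct_mulVec, vecMul_transpose]

variable [DecidableEq n]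

theorem posDef_transpose_mul_self_add_smul_one (B : Matrix m n ℝ) {lam : ℝ} (hlam : 0 < lam) :
    (Bᵀ * B + lam • 1).PosDef := by
  have hB : (Bᵀ * B).PosSemidef := by
    simpa only [conjTranspose_eq_transpose_of_trivial] using posSemidef_conjTranspose_mul_self B
  exact (PosDef.one.smul hlam).posSemidef_add hB

/-- `psiReg A b lam x` is the diagonal of `leverageMatrix (Amat A b x) lam`. -/
noncomputable def leverageMatrix (B : Matrix m n ℝ) (lam : ℝ) : Matrix m m ℝ :=
  B * (Bᵀ * B + lam • 1)⁻¹ * Bᵀ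

theorem leverageMatrix_posSemidef (B : Matrix m n ℝ) {lam : ℝ} (hlam : 0 < lam) :
    (leverageMatrix B lam).PosSemidef := by
  rw [leverageMatrix]
  simpa only [conjTranspose_eq_transpose_of_trivial, Matrix.mul_assoc] using
    (posDef_transpose_mul_self_add_smul_one B hlam).posSemidef.inv.mul_mul_conjTranspose_same B

variable [DecidableEq m]

theorem one_sub_leverageMatrix (B : Matrix m n ℝ) {lam : ℝ} (hlam : 0 < lam) :
    1 - leverageMatrix B lam = lam • (B * Bᵀ + lam • 1)⁻¹ := by
  set K := Bᵀ * B + lam • 1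
  set L := B * Bᵀ + lam • 1
  have hK : IsUnit K.det := (posDef_transpose_mul_self_add_smul_one B hlam).det_pos.ne'.isUnit
  have hL : IsUnit L.det := by
    simpa only [transpose_transpose] using
      (posDef_transpose_mul_self_add_smul_one Bᵀ hlam).det_pos.ne'.isUnit
  have hLB : L * B = B * K := by
    simp only [K, L, Matrix.add_mul, Matrix.mul_add, Matrix.mul_assoc, Matrix.smul_mul,
      Matrix.mul_smul, Matrix.one_mul, Matrix.mul_one]
  have push : B * K⁻¹ = L⁻¹ * B := calc
    B * K⁻¹ = L⁻¹ * (L * B) * K⁻¹ := by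
      rw [← Matrix.mul_assoc, nonsing_inv_mul L hL, Matrix.one_mul]
    _ = L⁻¹ * B := by
      rw [hLB, Matrix.mul_assoc, Matrix.mul_assoc, mul_nonsing_inv K hK, Matrix.mul_one]
  calc 1 - leverageMatrix B lam = L⁻¹ * (L - B * Bᵀ) := by
        rw [leverageMatrix, push, Matrix.mul_sub, nonsing_inv_mul L hL, Matrix.mul_assoc]
    _ = lam • L⁻¹ := by rw [add_sub_cancel_left, Matrix.mul_smul, Matrix.mul_one]

theorem one_sub_leverageMatrix_posSemidef (B : Matrix m n ℝ) {lam : ℝ} (hlam : 0 < lam) :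
    (1 - leverageMatrix B lam).PosSemidef := by
  rw [one_sub_leverageMatrix B hlam]
  exact ((posDef_transpose_mul_self_add_smul_one Bᵀ hlam).inv.smul hlam).posSemidef

omit [DecidableEq n] in
theorem dotProduct_hadamard_self_mulVec_le {P : Matrix m m ℝ} (hP : P.PosSemidef)
    (hP1 : (1 - P).PosSemidef) (v : m → ℝ) :
    v ⬝ᵥ ((P ⊙ P) *ᵥ v) ≤ v ⬝ᵥ (diagonal P.diag *ᵥ v) := by
  have h := (hP1.hadamard hP).dotProduct_mulVec_nonneg v
  have hsplit : (1 - P) ⊙ P = diagonal P.diag - P ⊙ P := by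
    rw [← one_hadamard]
    ext i j
    exact sub_mul _ _ _
  rwa [hsplit, sub_mulVec, star_trivial, dotProduct_sub, sub_nonneg] at h

end Leverage

end Matrix

theorem hasDerivAt_inv_pow {𝕜 : Type*} [NontriviallyNormedField 𝕜] (k : ℕ) {t : 𝕜}
    (ht : t ≠ 0) : HasDerivAt (fun t => t⁻¹ ^ k) (-(k * t⁻¹ ^ (k + 1))) t := by
  refine ((hasDerivAt_inv ht).fun_pow k).congr_deriv ?_
  rcases k with _ | k
  · simp
  · rw [add_tsub_cancel_right, ← inv_pow t 2]
    ring

section VolumetricBarrier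

variable {m n : ℕ} (A : Matrix (Fin m) (Fin n) ℝ) (b : Fin m → ℝ) (lam : ℝ)

noncomputable def invSlack (y : Fin n → ℝ) : Fin m → ℝ := (A *ᵥ y - b)⁻¹

noncomputable def slackGram (y : Fin n → ℝ) : Matrix (Fin n) (Fin n) ℝ :=
  Aᵀ * diagonal (invSlack A b y ^ 2) * A + lam • 1

noncomputable def slackKernel (y : Fin n → ℝ) : Matrix (Fin m) (Fin m) ℝ :=
  A * (slackGram A b lam y)⁻¹ * Aᵀ

theorem slackGram_eq (y : Fin n → ℝ) :
    slackGram A b lam y =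
      (diagonal (invSlack A b y) * A)ᵀ * (diagonal (invSlack A b y) * A) + lam • 1 := by
  simp only [slackGram, transpose_mul, diagonal_transpose, Matrix.mul_assoc]
  rw [← Matrix.mul_assoc (diagonal _), diagonal_mul_diagonal, sq]
  rfl

variable {lam} in
theorem slackGram_posDef (hlam : 0 < lam) (y : Fin n → ℝ) : (slackGram A b lam y).PosDef := by
  rw [slackGram_eq]
  exact posDef_transpose_mul_self_add_smul_one _ hlam

theorem slackKernel_transpose (y : Fin n → ℝ) :
    (slackKernel A b lam y)ᵀ = slackKernel A b lam y := by
  have hM : (slackGram A b lam y)ᵀ = slackGram A b lam y := by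
    simp only [slackGram, transpose_add, transpose_mul, transpose_transpose, diagonal_transpose,
      transpose_smul, transpose_one, Matrix.mul_assoc]
  simp only [slackKernel, transpose_mul, transpose_transpose, transpose_nonsing_inv, hM,
    Matrix.mul_assoc]

variable {A b} {y : Fin n → ℝ} (hy : ∀ i, (A *ᵥ y - b) i ≠ 0)
include hy

theorem Amat_eq : Amat A b y = diagonal (invSlack A b y) * A := by
  rw [Amat, inv_eq_left_inv]
  rw [diagonal_mul_diagonal, ← diagonal_one]
  exact congrArg diagonal (funext fun i => inv_mul_cancel₀ (hy i))

theorem Amat_mulVec (h : Fin n → ℝ) : Amat A b y *ᵥ h = invSlack A b y * (A *ᵥ h) := by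
  rw [Amat_eq hy, ← mulVec_mulVec]
  exact funext fun i => mulVec_diagonal _ _ i

theorem leverageMatrix_Amat :
    leverageMatrix (Amat A b y) lam =
      diagonal (invSlack A b y) * slackKernel A b lam y * diagonal (invSlack A b y) := by
  rw [Amat_eq hy, leverageMatrix, ← slackGram_eq, transpose_mul, diagonal_transpose]
  simp only [slackKernel, Matrix.mul_assoc]

theorem volBarrier_eq : volBarrier A b lam y = 1 / 2 * Real.log (slackGram A b lam y).det := by
  rw [volBarrier, slackGram_eq, Amat_eq hy]

omit hy

variable (A b)

theorem isOpen_setOf_slack_ne_zero : IsOpen {y : Fin n → ℝ | ∀ i, (A *ᵥ y - b) i ≠ 0} := by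
  simp only [Set.ofPred_forall]
  exact isOpen_iInter_of_finite fun i => isOpen_ne_fun ((continuous_apply i).comp
    (A.mulVecLin.continuous_of_finiteDimensional.sub continuous_const)) continuous_const

noncomputable def rowFunctional (i : Fin m) : (Fin n → ℝ) →L[ℝ] ℝ :=
  LinearMap.toContinuousLinearMap (LinearMap.proj i ∘ₗ A.mulVecLin)

theorem hasFDerivAt_invSlack_pow (k : ℕ) {i : Fin m} (hyi : (A *ᵥ y - b) i ≠ 0) :
    HasFDerivAt (fun y => invSlack A b y i ^ k)
      (-(k * invSlack A b y i ^ (k + 1)) • rowFunctional A i) y := by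
  have hs : HasFDerivAt (fun y => (A *ᵥ y - b) i) (rowFunctional A i) y :=
    (rowFunctional A i).hasFDerivAt.sub_const (b i)
  have h := (hasDerivAt_inv_pow k hyi).comp_hasFDerivAt y hs
  exact h

noncomputable def diagonalSandwich : (Fin m → ℝ) →L[ℝ] Matrix (Fin n) (Fin n) ℝ :=
  LinearMap.toContinuousLinearMap
    (mulRightLinearMap _ ℝ A ∘ₗ mulLeftLinearMap _ ℝ Aᵀ ∘ₗ diagonalLinearMap _ ℝ ℝ)

include hy in
theorem hasFDerivAt_slackGram :
    HasFDerivAt (slackGram A b lam)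
      (diagonalSandwich A ∘L ContinuousLinearMap.pi fun i =>
        -(2 * invSlack A b y i ^ 3) • rowFunctional A i) y := by
  have hw : HasFDerivAt (fun y => invSlack A b y ^ 2)
      (ContinuousLinearMap.pi fun i => -(2 * invSlack A b y i ^ 3) • rowFunctional A i) y :=
    hasFDerivAt_pi.2 fun i => by exact_mod_cast hasFDerivAt_invSlack_pow A b 2 (hy i)
  exact ((diagonalSandwich A).hasFDerivAt.comp y hw).add_const (lam • 1)

/-- `gradCoeff A b lam y i = -(dᵢ ψᵢ(y))`, so `hasFDerivAt_volBarrier` says `∇f(y) = -A_yᵀ ψ(y)`. -/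
noncomputable def gradCoeff (y : Fin n → ℝ) (i : Fin m) : ℝ :=
  -(invSlack A b y i ^ 3 * slackKernel A b lam y i i)

variable {lam}

include hy in
theorem hasFDerivAt_volBarrier (hlam : 0 < lam) :
    HasFDerivAt (volBarrier A b lam) (∑ i, gradCoeff A b lam y i • rowFunctional A i) y := by
  have hlogdet := ((hasFDerivAt_slackGram A b lam hy).log_det
    (slackGram_posDef A b hlam y).det_pos.ne').const_mul (1 / 2)
  refine (hlogdet.congr_fderiv ?_).congr_of_eventuallyEq ?_
  · refine ContinuousLinearMap.ext fun h => ?_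
    rw [_root_.sum_apply]
    change 1 / 2 * trace ((slackGram A b lam y)⁻¹ *
        (Aᵀ * diagonal (fun i => -(2 * invSlack A b y i ^ 3) * (A *ᵥ h) i) * A)) =
      ∑ i, gradCoeff A b lam y i * (A *ᵥ h) i
    rw [trace_mul_transpose_mul_diagonal_mul, Finset.mul_sum]
    exact Finset.sum_congr rfl fun i _ => by rw [gradCoeff, slackKernel]; ring
  · filter_upwards [(isOpen_setOf_slack_ne_zero A b).mem_nhds hy] with z hz
    exact volBarrier_eq lam hz

theorem fderiv_fderiv_volBarrier_apply_eq_sum (hlam : 0 < lam) {x : Fin n → ℝ}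
    (hx : ∀ i, (A *ᵥ x - b) i ≠ 0) (h : Fin n → ℝ) :
    fderiv ℝ (fderiv ℝ (volBarrier A b lam)) x h h =
      ∑ i, (3 * invSlack A b x i ^ 4 * slackKernel A b lam x i i * (A *ᵥ h) i -
        2 * invSlack A b x i ^ 3 * ∑ j, slackKernel A b lam x i j *
          (invSlack A b x j ^ 3 * (A *ᵥ h) j) * slackKernel A b lam x j i) * (A *ᵥ h) i := by
  set d := invSlack A b x
  set G := slackKernel A b lam x
  set N := (slackGram A b lam x)⁻¹
  have hN := (hasFDerivAt_slackGram A b lam hx).matrix_inv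
    (slackGram_posDef A b hlam x).det_pos.ne'.isUnit
  -- product rule for `gradCoeff · i = -(dᵢ³ * (A N Aᵀ)ᵢᵢ)`
  have hc (i : Fin m) := ((hasFDerivAt_invSlack_pow A b 3 (hx i)).mul
    ((LinearMap.toContinuousLinearMap (entryLinearMap ℝ ℝ i i ∘ₗ
      mulRightLinearMap _ ℝ Aᵀ ∘ₗ mulLeftLinearMap _ ℝ A)).hasFDerivAt.comp x hN)).neg
  have hgrad : fderiv ℝ (volBarrier A b lam) =ᶠ[nhds x]
      fun y => ∑ i, gradCoeff A b lam y i • rowFunctional A i := by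
    filter_upwards [(isOpen_setOf_slack_ne_zero A b).mem_nhds hx] with y hy
    exact (hasFDerivAt_volBarrier A b hy hlam).fderiv
  have hsum : HasFDerivAt (fun y => ∑ i, gradCoeff A b lam y i • rowFunctional A i) _ x :=
    HasFDerivAt.fun_sum fun i _ => (hc i).smul_const (rowFunctional A i)
  rw [hgrad.fderiv_eq, hsum.fderiv]
  simp only [_root_.sum_apply, ContinuousLinearMap.smulRight_apply]
  change ∑ i, -(d i ^ 3 * (A * -(N * (Aᵀ * diagonal (fun j => -(2 * d j ^ 3) * (A *ᵥ h) j) * A) *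
      N) * Aᵀ : Matrix (Fin m) (Fin m) ℝ) i i
      + G i i * (-((3 : ℕ) * d i ^ (3 + 1)) * (A *ᵥ h) i)) * (A *ᵥ h) i = _
  have hGDG (u : Fin m → ℝ) :
      A * -(N * (Aᵀ * diagonal u * A) * N) * Aᵀ = -(G * diagonal u * G) := by
    simp only [G, slackKernel, N, Matrix.mul_neg, Matrix.neg_mul, Matrix.mul_assoc]
  refine Finset.sum_congr rfl fun i _ => ?_
  have hs : ∑ j, G i j * (-(2 * d j ^ 3) * (A *ᵥ h) j) * G j i =
      -2 * ∑ j, G i j * (d j ^ 3 * (A *ᵥ h) j) * G j i := by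
    rw [Finset.mul_sum]
    exact Finset.sum_congr rfl fun j _ => by ring
  rw [hGDG, neg_apply, mul_apply]
  simp only [mul_diagonal, Nat.cast_ofNat]
  linear_combination (d i ^ 3 * (A *ᵥ h) i) * hs

theorem fderiv_fderiv_volBarrier_apply (hlam : 0 < lam) {x : Fin n → ℝ}
    (hx : ∀ i, (A *ᵥ x - b) i ≠ 0) (h : Fin n → ℝ) :
    fderiv ℝ (fderiv ℝ (volBarrier A b lam)) x h h =
      3 * ((Amat A b x *ᵥ h) ⬝ᵥ
          (diagonal (leverageMatrix (Amat A b x) lam).diag *ᵥ (Amat A b x *ᵥ h))) -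
        2 * ((Amat A b x *ᵥ h) ⬝ᵥ ((leverageMatrix (Amat A b x) lam ⊙
          leverageMatrix (Amat A b x) lam) *ᵥ (Amat A b x *ᵥ h))) := by
  rw [fderiv_fderiv_volBarrier_apply_eq_sum A b hlam hx, Amat_mulVec hx]
  set d := invSlack A b x
  set G := slackKernel A b lam x
  set a := A *ᵥ h
  have hG (i j : Fin m) : G j i = G i j := by
    rw [← transpose_apply G i j, slackKernel_transpose]
  have hP (i j : Fin m) : leverageMatrix (Amat A b x) lam i j = d i * G i j * d j := by
    rw [leverageMatrix_Amat lam hx, mul_diagonal, diagonal_mul]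
  simp only [dotProduct, mulVec_diagonal, diag, hP, Pi.mul_apply]
  simp only [mulVec, dotProduct, hadamard_apply, hP, Pi.mul_apply]
  rw [Finset.mul_sum, Finset.mul_sum, ← Finset.sum_sub_distrib]
  refine Finset.sum_congr rfl fun i _ => ?_
  have hs : d i ^ 3 * ∑ j, G i j * (d j ^ 3 * a j) * G j i =
      d i * ∑ j, d i * G i j * d j * (d i * G i j * d j) * (d j * a j) := by
    simp only [Finset.mul_sum]
    exact Finset.sum_congr rfl fun j _ => by rw [hG]; ring
  linear_combination (-2 * a i) * hs

end VolumetricBarrier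

/-- Hessian bounds for the regularized volumetric barrier: at a strictly feasible point
`x`, for every direction `h`,
`hᵀ(A_xᵀΨ(x)A_x)h ≤ D²f(x)[h,h] ≤ 3·hᵀ(A_xᵀΨ(x)A_x)h`, i.e.
`A_xᵀΨ(x)A_x ⪯ ∇²f(x) ⪯ 3·A_xᵀΨ(x)A_x`. -/
theorem stmt17 (m n : ℕ) (A : Matrix (Fin m) (Fin n) ℝ) (b : Fin m → ℝ)
    (lam : ℝ) (hlam : 0 < lam)
    (x : Fin n → ℝ) (hx : ∀ i, 0 < (A.mulVec x - b) i) :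
    ∀ h : Fin n → ℝ,
      h ⬝ᵥ ((Amat A b x)ᵀ * Matrix.diagonal (psiReg A b lam x) * Amat A b x).mulVec h ≤
          iteratedFDeriv ℝ 2 (volBarrier A b lam) x ![h, h] ∧
        iteratedFDeriv ℝ 2 (volBarrier A b lam) x ![h, h] ≤
          3 * (h ⬝ᵥ ((Amat A b x)ᵀ * Matrix.diagonal (psiReg A b lam x) *
            Amat A b x).mulVec h) := by
  intro h
  have hP := leverageMatrix_posSemidef (Amat A b x) hlam
  have hPP := (hP.hadamard hP).dotProduct_mulVec_nonneg (Amat A b x *ᵥ h)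
  have hPP_le := dotProduct_hadamard_self_mulVec_le hP
    (one_sub_leverageMatrix_posSemidef (Amat A b x) hlam) (Amat A b x *ᵥ h)
  rw [star_trivial] at hPP
  simp only [iteratedFDeriv_two_apply, cons_val_zero, cons_val_one]
  rw [dotProduct_mulVec_transpose_mul_mul,
    fderiv_fderiv_volBarrier_apply A b hlam (fun i => (hx i).ne') h,
    show psiReg A b lam x = (leverageMatrix (Amat A b x) lam).diag from rfl]
  constructor <;> linarith
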